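/- Every ω-precompact, sequentially h-complete Hausdorff topological group of countable pseudocharacter is totally minimal and metrizable. -/

import Mathlib

/-!
In an ω-precompact group, every countable family of neighbourhoods of `1` can be enlarged to a
countable family generating the neighbourhoods of `1` of a coarser group topology (Guran).
Sequential h-completeness makes each such topology that is Hausdorff sequentially complete, hence
Baire, and ω-precompactness then makes continuous surjective homomorphisms between such groups
almost open; Banach's successive approximations make them open. Seeding the construction with a
countable family of open sets whose intersection is `{1}` gives a Hausdorff coarser topology of
countable character, and the open mapping theorem for the identity shows that it is the topology
of `G`, so `G` is first countable, hence metrizable. A continuous homomorphic image `H` of `G`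
is the image of a second countable space, so `{1}` is a Gδ in `H`; thus `H` is first countable
too, and the open mapping theorem applies to `G → H`.
-/

open Topology Pointwise

universe u

section Defs
variable (G : Type u) [Group G] [TopologicalSpace G] [IsTopologicalGroup G]

/-- Sequential completeness w.r.t. the canonical group uniformity. -/
def SeqComplete : Prop :=
  letI := IsTopologicalGroup.rightUniformSpace G
  ∀ u : ℕ → G, CauchySeq u → ∃ x, Filter.Tendsto u Filter.atTop (𝓝 x)

/-- `G` is sequentially h-complete: every continuous homomorphic image is
sequentially complete. -/
def SeqHComplete : Prop :=
  ∀ (H : Type u) [Group H] [TopologicalSpace H] [IsTopologicalGroup H] [T2Space H]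
    (f : G →* H), Continuous f → Function.Surjective f → SeqComplete H

/-- `G` is ω-precompact. -/
def OmegaPrecompact : Prop :=
  ∀ U ∈ 𝓝 (1 : G), ∃ F : Set G, F.Countable ∧ U * F = Set.univ

/-- `G` has countable pseudocharacter. -/
def CountablePseudocharacter : Prop :=
  ∃ s : ℕ → Set G, (∀ n, IsOpen (s n)) ∧ (⋂ n, s n) = ({1} : Set G)

/-- `G` is precompact. -/
def GroupPrecompact : Prop :=
  ∀ U ∈ 𝓝 (1 : G), ∃ F : Set G, F.Finite ∧ U * F = Set.univ

/-- `G` is h-complete: every continuous homomorphic image is complete. -/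
def HComplete : Prop :=
  ∀ (H : Type u) [Group H] [TopologicalSpace H] [IsTopologicalGroup H] [T2Space H]
    (f : G →* H), Continuous f → Function.Surjective f →
      letI := IsTopologicalGroup.rightUniformSpace H
      CompleteSpace H

/-- `G` is maximally almost periodic. -/
def MAP : Prop :=
  ∃ (K : Type u) (_ : Group K) (_ : TopologicalSpace K),
    ∃ (_ : IsTopologicalGroup K) (_ : T2Space K) (_ : CompactSpace K),
      ∃ f : G →* K, Continuous f ∧ Function.Injective f

/-- `G` is minimally almost periodic. -/
def MinAP : Prop :=
  ∀ (K : Type u) [Group K] [TopologicalSpace K] [IsTopologicalGroup K] [T2Space K]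
    [CompactSpace K] (f : G →* K), Continuous f → ∀ g : G, f g = 1

/-- `G` is c-compact. -/
def CCompact : Prop :=
  ∀ (H : Type u) [Group H] [TopologicalSpace H] [IsTopologicalGroup H] [T2Space H]
    (S : Subgroup (G × H)), IsClosed (S : Set (G × H)) →
      IsClosed ((S.map (MonoidHom.snd G H) : Subgroup H) : Set H)

/-- `G` is totally minimal. -/
def TotallyMinimal : Prop :=
  ∀ (H : Type u) [Group H] [TopologicalSpace H] [IsTopologicalGroup H] [T2Space H]
    (f : G →* H), Continuous f → Function.Surjective f → IsOpenMap f

/-- `G` is minimal. -/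
def MinimalGroup : Prop :=
  ∀ (H : Type u) [Group H] [TopologicalSpace H] [IsTopologicalGroup H] [T2Space H]
    (f : G →* H), Continuous f → Function.Bijective f → IsOpenMap f

end Defs

/-- `X` has a countable network. -/
def HasCountableNetwork (X : Type u) [TopologicalSpace X] : Prop :=
  ∃ N : Set (Set X), N.Countable ∧ ∀ U : Set X, IsOpen U → ∃ S ⊆ N, ⋃₀ S = U

open Filter Set Function TopologicalSpace

theorem Set.Countable.exists_superset_invariant {α : Type*} {s T : Set α} {k : α → Set α}
    (hk : ∀ a ∈ s, (k a).Countable) (hks : ∀ a ∈ s, k a ⊆ s) (hT : T.Countable) (hTs : T ⊆ s) :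
    ∃ C : Set α, C.Countable ∧ T ⊆ C ∧ C ⊆ s ∧ ∀ a ∈ C, k a ⊆ C := by
  set step : Set α → Set α := fun S => S ∪ ⋃ a ∈ S, k a
  have hstep : ∀ n, (step^[n] T).Countable ∧ step^[n] T ⊆ s := by
    intro n
    induction n with
    | zero => exact ⟨hT, hTs⟩
    | succ n ih =>
      rw [iterate_succ_apply']
      exact ⟨ih.1.union (ih.1.biUnion fun a ha => hk a (ih.2 ha)),
        union_subset ih.2 (iUnion₂_subset fun a ha => hks a (ih.2 ha))⟩
  refine ⟨⋃ n, step^[n] T, countable_iUnion fun n => (hstep n).1,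
    subset_iUnion (fun n => step^[n] T) 0, iUnion_subset fun n => (hstep n).2, fun a ha => ?_⟩
  obtain ⟨n, hn⟩ := mem_iUnion.1 ha
  refine subset_trans ?_ (subset_iUnion _ (n + 1))
  rw [iterate_succ_apply']
  exact subset_union_of_subset_right (subset_biUnion_of_mem hn) _

theorem exists_seq_of_forall_exists {α : Type*} {P : ℕ → α → Prop} {R : ℕ → α → α → Prop}
    {a : α} (h0 : P 0 a) (h : ∀ n x, P n x → ∃ y, P (n + 1) y ∧ R n x y) :
    ∃ q : ℕ → α, q 0 = a ∧ ∀ n, P n (q n) ∧ R n (q n) (q (n + 1)) := by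
  choose! g hg using h
  let q : ℕ → α := fun n => Nat.rec (motive := fun _ => α) a g n
  have hq : ∀ n, P n (q n) := fun n => Nat.rec h0 (fun n ih => (hg n _ ih).1) n
  exact ⟨q, rfl, fun n => ⟨hq n, (hg n _ (hq n)).2⟩⟩

theorem Filter.tendsto_generate_of_forall_exists {α β : Type*} {l : Filter α} {C : Set (Set β)}
    {m : α → β} (h : ∀ U ∈ C, ∃ V ∈ l, V ⊆ m ⁻¹' U) : Tendsto m l (generate C) :=
  le_generate_iff.2 fun U hU =>
    let ⟨_, hV, hVU⟩ := h U hU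
    show m ⁻¹' U ∈ l from mem_of_superset hV hVU

section GroupFilterBasis

variable {G : Type*} [Group G]

abbrev GroupFilterBasis.ofGenerate (C : Set (Set G)) (one : ∀ U ∈ C, (1 : G) ∈ U)
    (mul : ∀ U ∈ C, ∃ V ∈ C, V * V ⊆ U) (inv : ∀ U ∈ C, ∃ V ∈ C, V ⊆ (·⁻¹) ⁻¹' U)
    (conj : ∀ (g : G), ∀ U ∈ C, ∃ V ∈ C, V ⊆ (g * · * g⁻¹) ⁻¹' U) : GroupFilterBasis G where
  toFilterBasis := (generate C).asBasis
  one' hU := (le_generate_iff.2 one : pure 1 ≤ generate C) hU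
  mul' {U} hU := by
    have : Tendsto (fun p : G × G => p.1 * p.2) (generate C ×ˢ generate C) (generate C) :=
      tendsto_generate_of_forall_exists fun U hU =>
        let ⟨V, hV, hVU⟩ := mul U hU
        ⟨V ×ˢ V, prod_mem_prod (mem_generate_of_mem hV) (mem_generate_of_mem hV),
          fun p hp => hVU (mul_mem_mul hp.1 hp.2)⟩
    obtain ⟨V, hV, hVU⟩ := mem_prod_self_iff.1 (this hU)
    exact ⟨V, hV, mul_subset_iff.2 fun a ha b hb => hVU (mk_mem_prod ha hb)⟩
  inv' {U} hU :=
    ⟨_, (tendsto_generate_of_forall_exists fun U hU =>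
      let ⟨V, hV, hVU⟩ := inv U hU; ⟨V, mem_generate_of_mem hV, hVU⟩ :
        Tendsto (·⁻¹) (generate C) (generate C)) hU, subset_rfl⟩
  conj' g {U} hU :=
    ⟨_, (tendsto_generate_of_forall_exists fun U hU =>
      let ⟨V, hV, hVU⟩ := conj g U hU; ⟨V, mem_generate_of_mem hV, hVU⟩ :
        Tendsto (g * · * g⁻¹) (generate C) (generate C)) hU, subset_rfl⟩

theorem GroupFilterBasis.nhds_one_ofGenerate {C : Set (Set G)} {one mul inv conj} :
    @nhds G (GroupFilterBasis.ofGenerate C one mul inv conj).topology 1 = generate C :=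
  (GroupFilterBasis.nhds_one_eq _).trans (asBasis_filter _)

theorem IsTopologicalGroup.le_of_nhds_one_le {τ τ' : TopologicalSpace G}
    [@IsTopologicalGroup G τ _] [@IsTopologicalGroup G τ' _]
    (h : @nhds G τ 1 ≤ @nhds G τ' 1) : τ ≤ τ' :=
  continuous_id_iff_le.1 <| @continuous_of_continuousAt_one G τ _ _ G (G →* G) _ τ' _ _ _
    (MonoidHom.id G) (tendsto_id'.2 h)

end GroupFilterBasis

section OmegaPrecompact

variable {G H : Type u} [Group G] [tG : TopologicalSpace G] [Group H] [TopologicalSpace H]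

theorem OmegaPrecompact.map (hω : OmegaPrecompact G) (f : G →* H) (hf : Continuous f)
    (hfs : Surjective f) : OmegaPrecompact H := by
  intro U hU
  obtain ⟨F, hFc, hWF⟩ := hω _ (hf.continuousAt.preimage_mem_nhds (by rwa [map_one]))
  refine ⟨f '' F, hFc.image f, ?_⟩
  rw [← image_preimage_eq U hfs, ← image_mul, hWF, image_univ, hfs.range_eq]

variable [IsTopologicalGroup G]

/-- If `W * W * W ⊆ U` and `g = w * f` with `w ∈ W`, then `g` conjugates `f⁻¹ W f` into `U`;
countably many `f` suffice by ω-precompactness. -/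
theorem OmegaPrecompact.exists_countable_conj_subset (hω : OmegaPrecompact G) {U : Set G}
    (hU : U ∈ 𝓝 (1 : G)) :
    ∃ 𝒱 : Set (Set G), 𝒱.Countable ∧ (∀ V ∈ 𝒱, V ∈ 𝓝 1 ∧ V⁻¹ = V ∧ V * V ⊆ U) ∧
      ∀ g : G, ∃ V ∈ 𝒱, V ⊆ (g * · * g⁻¹) ⁻¹' U := by
  obtain ⟨W₁, hW₁, -, -, hW₁U⟩ := exists_closed_nhds_one_inv_eq_mul_subset hU
  obtain ⟨W, hW, -, hWinv, hWW₁⟩ := exists_closed_nhds_one_inv_eq_mul_subset hW₁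
  have hWWW : W * W * W ⊆ U :=
    (mul_subset_mul hWW₁ ((subset_mul_left W (mem_of_mem_nhds hW)).trans hWW₁)).trans hW₁U
  obtain ⟨F, hFc, hWF⟩ := hω W hW
  set V : G → Set G := fun f => W ∩ (f * · * f⁻¹) ⁻¹' W
  refine ⟨V '' F, hFc.image V, ?_, fun g => ?_⟩
  · rintro _ ⟨f, -, rfl⟩
    have hconj : Continuous (f * · * f⁻¹) := (continuous_const_mul f).mul continuous_const
    refine ⟨inter_mem hW (hconj.continuousAt.preimage_mem_nhds (by simpa using hW)), ?_, ?_⟩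
    · have hsym : ∀ a, a⁻¹ ∈ W ↔ a ∈ W := fun a => by rw [← Set.mem_inv, hWinv]
      ext x
      simp only [V, Set.mem_inv, mem_inter_iff, mem_preimage, hsym,
        show f * x⁻¹ * f⁻¹ = (f * x * f⁻¹)⁻¹ by group]
    · exact (mul_subset_mul inter_subset_left inter_subset_left).trans
        (hWW₁.trans ((subset_mul_left W₁ (mem_of_mem_nhds hW₁)).trans hW₁U))
  · obtain ⟨w, hw, f, hf, rfl⟩ : g ∈ W * F := hWF ▸ mem_univ g
    refine ⟨V f, mem_image_of_mem V hf, fun x hx => hWWW ?_⟩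
    refine ⟨w * (f * x * f⁻¹), mul_mem_mul hw hx.2, w⁻¹, hWinv ▸ inv_mem_inv.2 hw, ?_⟩
    group

theorem OmegaPrecompact.exists_groupFilterBasis (hω : OmegaPrecompact G) {T : Set (Set G)}
    (hT : T.Countable) (hTn : T ⊆ (𝓝 (1 : G)).sets) :
    ∃ B : GroupFilterBasis G, tG ≤ B.topology ∧ (@nhds G B.topology 1).IsCountablyGenerated ∧
      T ⊆ (@nhds G B.topology 1).sets := by
  choose! k hkc hk hkconj using fun U (hU : U ∈ 𝓝 (1 : G)) => hω.exists_countable_conj_subset hU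
  obtain ⟨C, hCc, hTC, hCn, hCk⟩ :=
    hT.exists_superset_invariant hkc (fun U hU V hV => (hk U hU V hV).1) hTn
  have hroot : ∀ U ∈ C, ∃ V ∈ C, V⁻¹ = V ∧ V * V ⊆ U := fun U hU => by
    obtain ⟨V, hV, -⟩ := hkconj U (hCn hU) 1
    exact ⟨V, hCk U hU hV, (hk U (hCn hU) V hV).2⟩
  let B := GroupFilterBasis.ofGenerate C (fun U hU => mem_of_mem_nhds (hCn hU))
    (fun U hU => let ⟨V, hV, _, hVU⟩ := hroot U hU; ⟨V, hV, hVU⟩)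
    (fun U hU => let ⟨V, hV, hVinv, hVU⟩ := hroot U hU
      ⟨V, hV, fun x hx => hVU <| subset_mul_left V (mem_of_mem_nhds (hCn hV)) <|
        hVinv ▸ inv_mem_inv.2 hx⟩)
    (fun g U hU => let ⟨V, hV, hVU⟩ := hkconj U (hCn hU) g; ⟨V, hCk U hU hV, hVU⟩)
  have hB : @nhds G B.topology 1 = generate C := GroupFilterBasis.nhds_one_ofGenerate
  refine ⟨B, ?_, ?_, fun U hU => hB ▸ mem_generate_of_mem (hTC hU)⟩
  · exact IsTopologicalGroup.le_of_nhds_one_le (hB ▸ le_generate_iff.2 hCn)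
  · rw [hB]
    exact ⟨⟨C, hCc, rfl⟩⟩

end OmegaPrecompact

section OpenMapping

variable {A B : Type*} [Group A] [Group B]

theorem mul_inv_mem_of_forall_succ {W : ℕ → Set A} (hW1 : ∀ n, (1 : A) ∈ W n)
    (hWmul : ∀ n, W (n + 1) * W (n + 1) ⊆ W n) {q : ℕ → A}
    (hq : ∀ n, q (n + 1) * (q n)⁻¹ ∈ W (n + 1)) {m n : ℕ} (hmn : m ≤ n) :
    q n * (q m)⁻¹ ∈ W m :=
  Nat.decreasingInduction' (fun k _ _ hk => hWmul k ⟨_, hk, _, hq k, by group⟩) hmn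
    (by simpa using hW1 n)

variable [tA : TopologicalSpace A] [IsTopologicalGroup A] [tB : TopologicalSpace B]
  [IsTopologicalGroup B]

theorem IsTopologicalGroup.firstCountableTopology_of_nhds_one
    [(𝓝 (1 : A)).IsCountablyGenerated] : FirstCountableTopology A :=
  ⟨fun x => by rw [← map_mul_left_nhds_one x]; infer_instance⟩

theorem IsTopologicalGroup.rightUniformity_isCountablyGenerated [FirstCountableTopology A] :
    (@uniformity A (IsTopologicalGroup.rightUniformSpace A)).IsCountablyGenerated :=
  comap.isCountablyGenerated _ _

theorem IsTopologicalGroup.metrizableSpace [FirstCountableTopology A] [T2Space A] :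
    MetrizableSpace A :=
  letI := IsTopologicalGroup.rightUniformSpace A
  haveI := IsTopologicalGroup.rightUniformity_isCountablyGenerated (A := A)
  UniformSpace.metrizableSpace

theorem SeqComplete.baireSpace [FirstCountableTopology A] (h : SeqComplete A) : BaireSpace A :=
  letI := IsTopologicalGroup.rightUniformSpace A
  haveI := IsTopologicalGroup.rightUniformity_isCountablyGenerated (A := A)
  haveI : CompleteSpace A := UniformSpace.complete_of_cauchySeq_tendsto h
  BaireSpace.of_completelyPseudoMetrizable

theorem IsTopologicalGroup.exists_antitone_basis_nhds_one_mul_subset [FirstCountableTopology A]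
    {V : Set A} (hV : V ∈ 𝓝 1) :
    ∃ W : ℕ → Set A, (𝓝 1).HasAntitoneBasis W ∧ W 0 * W 0 ⊆ V ∧
      ∀ n, W (n + 1) * W (n + 1) ⊆ W n := by
  obtain ⟨W, hW, hWmul⟩ := IsTopologicalGroup.exists_antitone_basis_nhds_one A
  obtain ⟨V', hV', -, -, hV'V⟩ := exists_closed_nhds_one_inv_eq_mul_subset hV
  obtain ⟨N, hN⟩ := hW.mem_iff.1 hV'
  have hN' : W (0 + N) ⊆ V' := by simpa using hN
  refine ⟨W ∘ (· + N), hW.comp_mono (fun a b h => Nat.add_le_add_right h N)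
    (tendsto_add_atTop_nat N), (mul_subset_mul hN' hN').trans hV'V, fun n => ?_⟩
  simpa only [comp_apply, add_right_comm n 1 N] using hWmul (n + N)

theorem cauchySeq_of_mul_inv_mem {W : ℕ → Set A} (hW : (𝓝 1).HasAntitoneBasis W)
    (hWmul : ∀ n, W (n + 1) * W (n + 1) ⊆ W n) {q : ℕ → A}
    (hq : ∀ n, q (n + 1) * (q n)⁻¹ ∈ W (n + 1)) :
    @CauchySeq A ℕ (IsTopologicalGroup.rightUniformSpace A) _ q := by
  let := IsTopologicalGroup.rightUniformSpace A
  have h𝓤 : (uniformity A).HasBasis (fun _ => True) fun i => {x | x.1 * x.2⁻¹ ∈ W i} := by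
    rw [← comap_swap_uniformity]
    exact (hW.toHasBasis.comap fun x : A × A => x.2 * x.1⁻¹).comap Prod.swap
  exact h𝓤.cauchySeq_iff'.2 fun m _ => ⟨m, fun n hmn =>
    mul_inv_mem_of_forall_succ (fun k => mem_of_mem_nhds (hW.mem k)) hWmul hq hmn⟩

theorem exists_mem_mul_inv_mem_of_mem_closure {T N : Set B} {z : B} (hz : z ∈ closure T)
    (hN : N ∈ 𝓝 1) : ∃ w ∈ T, z * w⁻¹ ∈ N := by
  have : {w | z * w⁻¹ ∈ N} ∈ 𝓝 z :=
    (continuous_const.mul continuous_inv).continuousAt.preimage_mem_nhds (by simpa using hN)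
  obtain ⟨w, hwN, hwT⟩ := mem_closure_iff_nhds.1 hz _ this
  exact ⟨w, hwT, hwN⟩

theorem closure_inv_mul_mem_nhds_one [BaireSpace B] {S F : Set B} (hF : F.Countable)
    (hSF : S * F = univ) : closure (S⁻¹ * S) ∈ 𝓝 1 := by
  have hcover : ⋃ f ∈ F, Homeomorph.mulRight f '' closure S = univ :=
    eq_univ_of_forall fun g => by
    obtain ⟨s, hs, f, hf, rfl⟩ : g ∈ S * F := hSF ▸ mem_univ g
    exact mem_biUnion hf (mem_image_of_mem _ (subset_closure hs))
  obtain ⟨_, hx⟩ := (dense_biUnion_interior_of_closed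
    (fun f _ => (Homeomorph.mulRight f).isClosedMap _ isClosed_closure) hF hcover).nonempty
  obtain ⟨f, -, hxf⟩ := mem_iUnion₂.1 hx
  rw [← (Homeomorph.mulRight f).image_interior] at hxf
  obtain ⟨y, hy, -⟩ := hxf
  refine mem_of_superset (isOpen_interior.mul_left.mem_nhds
    ⟨y⁻¹, inv_mem_inv.2 hy, y, hy, inv_mul_cancel y⟩) ?_
  rintro _ ⟨a, ha, b, hb, rfl⟩
  simpa using map_mem_closure₂ (f := fun a b : B => a⁻¹ * b) (by fun_prop)
    (interior_subset (mem_inv.1 ha)) (interior_subset hb)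
    fun a ha b hb => mul_mem_mul (inv_mem_inv.2 ha) hb

theorem MonoidHom.closure_image_mem_nhds_one [BaireSpace B] (hω : OmegaPrecompact A)
    (f : A →* B) (hfs : Surjective f) {V : Set A} (hV : V ∈ 𝓝 1) : closure (f '' V) ∈ 𝓝 1 := by
  obtain ⟨W, hW, -, hWinv, hWV⟩ := exists_closed_nhds_one_inv_eq_mul_subset hV
  obtain ⟨F, hFc, hWF⟩ := hω W hW
  refine mem_of_superset (closure_inv_mul_mem_nhds_one (S := f '' W) (hFc.image f) ?_)
    (closure_mono ?_)
  · rw [← image_mul, hWF, image_univ, hfs.range_eq]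
  · rintro _ ⟨_, ⟨a, ha, hax⟩, _, ⟨b, hb, rfl⟩, rfl⟩
    refine ⟨a⁻¹ * b, hWV (mul_mem_mul (hWinv ▸ inv_mem_inv.2 ha) hb), ?_⟩
    rw [map_mul, map_inv, hax, inv_inv]

/-- Banach's successive approximation argument: a preimage of `y` is the limit of a sequence
whose increments lie in a basic sequence of neighbourhoods shrinking fast enough to be
Cauchy, while the images approach `y` along a countable basis at `1` in `B`. -/
theorem MonoidHom.image_mem_nhds_one_of_closure_image [FirstCountableTopology A]
    [FirstCountableTopology B] [T2Space B] (hA : SeqComplete A) (f : A →* B) (hf : Continuous f)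
    (hfo : ∀ V ∈ 𝓝 (1 : A), closure (f '' V) ∈ 𝓝 (1 : B)) {V : Set A} (hV : V ∈ 𝓝 1) :
    f '' V ∈ 𝓝 1 := by
  obtain ⟨W, hW, hW0, hWmul⟩ := IsTopologicalGroup.exists_antitone_basis_nhds_one_mul_subset hV
  obtain ⟨M, hM⟩ := (𝓝 (1 : B)).exists_antitone_basis
  refine mem_of_superset (inter_mem (hfo _ (hW.mem 1)) (hM.mem 0)) fun y hy => ?_
  obtain ⟨q, hq0, hq⟩ := exists_seq_of_forall_exists
    (P := fun n p => y * (f p)⁻¹ ∈ closure (f '' W (n + 1)) ∩ M n)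
    (R := fun n p p' => p' * p⁻¹ ∈ W (n + 1)) (a := 1) (by simpa using hy) fun n p hp => by
      obtain ⟨_, ⟨x, hx, rfl⟩, hxN⟩ := exists_mem_mul_inv_mem_of_mem_closure hp.1
        (inter_mem (hfo _ (hW.mem (n + 2))) (hM.mem (n + 1)))
      exact ⟨x * p, by simpa [mul_assoc] using hxN, by simpa using hx⟩
  obtain ⟨x, hx⟩ := hA q (cauchySeq_of_mul_inv_mem hW hWmul fun n => (hq n).2)
  have hfx : f x = y := by
    have hy : Tendsto (fun n => y * (f (q n))⁻¹) atTop (𝓝 1) := hM.tendsto fun n => (hq n).1.2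
    exact tendsto_nhds_unique ((hf.tendsto x).comp hx)
      (by simpa [comp_def] using hy.inv.mul_const y)
  obtain ⟨n, hn⟩ := ((by simpa using hx.inv.mul_const x :
    Tendsto (fun n => (q n)⁻¹ * x) atTop (𝓝 1)).eventually_mem (hW.mem 0)).exists
  have hqn : q n ∈ W 0 := by
    simpa [hq0] using mul_inv_mem_of_forall_succ (fun k => mem_of_mem_nhds (hW.mem k)) hWmul
      (fun n => (hq n).2) (Nat.zero_le n)
  exact ⟨x, hW0 ⟨q n, hqn, _, hn, mul_inv_cancel_left _ _⟩, hfx⟩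

theorem MonoidHom.isOpenMap_of_image_mem_nhds_one (f : A →* B)
    (h : ∀ V ∈ 𝓝 (1 : A), f '' V ∈ 𝓝 (1 : B)) : IsOpenMap f := by
  refine isOpenMap_iff_nhds_le.2 fun a => ?_
  rw [← map_mul_left_nhds_one a, map_map, ← map_mul_left_nhds_one (f a),
    show f ∘ (a * ·) = (f a * ·) ∘ f from funext (map_mul f a), ← map_map]
  exact map_mono (le_map h)

theorem MonoidHom.image_mem_nhds_one_of_seqComplete [FirstCountableTopology A]
    [FirstCountableTopology B] [T2Space B] (hω : OmegaPrecompact A) (hA : SeqComplete A)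
    (hB : SeqComplete B) (f : A →* B) (hf : Continuous f) (hfs : Surjective f) {V : Set A}
    (hV : V ∈ 𝓝 1) : f '' V ∈ 𝓝 1 :=
  have := hB.baireSpace
  f.image_mem_nhds_one_of_closure_image hA hf (fun _ => f.closure_image_mem_nhds_one hω hfs) hV

end OpenMapping

section Metrizability

variable {G H : Type u} [Group G] [tG : TopologicalSpace G] [Group H] [TopologicalSpace H]

theorem OmegaPrecompact.mono (hω : OmegaPrecompact G) {τ : TopologicalSpace G} (h : tG ≤ τ) :
    @OmegaPrecompact G _ τ :=
  fun U hU => hω U (nhds_mono h hU)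

theorem SeqHComplete.seqComplete_of_le [IsTopologicalGroup G] (hs : SeqHComplete G)
    {τ : TopologicalSpace G} [@IsTopologicalGroup G τ _] [@T2Space G τ] (h : tG ≤ τ) :
    @SeqComplete G _ τ _ :=
  @hs G _ τ _ _ (MonoidHom.id G) (continuous_id_iff_le.2 h) surjective_id

theorem SeqHComplete.map [IsTopologicalGroup G] [IsTopologicalGroup H] (hs : SeqHComplete G)
    (f : G →* H) (hf : Continuous f) (hfs : Surjective f) : SeqHComplete H :=
  fun K _ _ _ _ g hg hgs => hs K (g.comp f) (hg.comp hf) (hgs.comp hfs)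

variable [IsTopologicalGroup G]

/-- Given `U ∈ 𝓝 1`, Guran's construction yields a group topology of countable character between
those of `G` and `B₀` in which `U` is a neighbourhood of `1`; the open mapping theorem for its
identity map onto `B₀` makes `U` a `B₀`-neighbourhood of `1`. -/
theorem OmegaPrecompact.eq_of_le (hω : OmegaPrecompact G) (hs : SeqHComplete G)
    {B₀ : GroupFilterBasis G} [@T2Space G B₀.topology]
    [hcg₀ : (@nhds G B₀.topology 1).IsCountablyGenerated] (hle : tG ≤ B₀.topology) :
    tG = B₀.topology := by
  refine le_antisymm hle (IsTopologicalGroup.le_of_nhds_one_le fun U hU => ?_)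
  obtain ⟨S, hSc, hS⟩ := hcg₀.out
  obtain ⟨B, hleB, hcg, hSB⟩ := hω.exists_groupFilterBasis (hSc.insert U)
    (insert_subset hU fun s hs => nhds_mono hle (hS ▸ mem_generate_of_mem hs))
  have hBB₀ : B.topology ≤ B₀.topology := IsTopologicalGroup.le_of_nhds_one_le
    (hS ▸ le_generate_iff.2 fun s hs => hSB (mem_insert_of_mem U hs))
  have := t2Space_antitone hBB₀ ‹_›
  have := @IsTopologicalGroup.firstCountableTopology_of_nhds_one G _ B.topology _ hcg
  have := @IsTopologicalGroup.firstCountableTopology_of_nhds_one G _ B₀.topology _ hcg₀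
  simpa using MonoidHom.image_mem_nhds_one_of_seqComplete (tA := B.topology)
    (tB := B₀.topology) (hω.mono hleB) (hs.seqComplete_of_le (τ := B.topology) hleB)
    (hs.seqComplete_of_le (τ := B₀.topology) hle) (MonoidHom.id G)
    (continuous_id_iff_le.2 hBB₀) surjective_id (hSB (mem_insert U S))

theorem OmegaPrecompact.firstCountableTopology (hω : OmegaPrecompact G) (hs : SeqHComplete G)
    (h1 : IsGδ ({1} : Set G)) : FirstCountableTopology G := by
  obtain ⟨T, hTo, hTc, hT1⟩ := h1
  have hTn : T ⊆ (𝓝 (1 : G)).sets := fun t ht =>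
    (hTo t ht).mem_nhds (mem_sInter.1 (hT1 ▸ mem_singleton 1) t ht)
  obtain ⟨B₀, hle₀, hcg₀, hT₀⟩ := hω.exists_groupFilterBasis hTc hTn
  have := @IsTopologicalGroup.t2Space_of_one_sep G B₀.topology _ _ fun x hx => by
    have : x ∉ ⋂₀ T := by rwa [← hT1, mem_singleton_iff]
    obtain ⟨t, ht, hxt⟩ : ∃ t ∈ T, x ∉ t := by simpa [mem_sInter] using this
    exact ⟨t, hT₀ ht, hxt⟩
  rw [hω.eq_of_le hs hle₀]
  exact @IsTopologicalGroup.firstCountableTopology_of_nhds_one G _ B₀.topology _ hcg₀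

theorem OmegaPrecompact.secondCountableTopology [FirstCountableTopology G]
    (hω : OmegaPrecompact G) : SecondCountableTopology G := by
  obtain ⟨e, he⟩ := (𝓝 (1 : G)).exists_antitone_basis
  choose F hFc hF using fun n => hω (e n) (he.mem n)
  have : SeparableSpace G := ⟨⟨⋃ n, F n, countable_iUnion hFc, fun x =>
    mem_closure_iff_nhds.2 fun O hO => by
      obtain ⟨n, hn⟩ := he.mem_iff.1 <|
        (continuous_inv.mul continuous_const).continuousAt.preimage_mem_nhds (by simpa using hO)
      obtain ⟨w, hw, f, hf, rfl⟩ : x ∈ e n * F n := hF n ▸ mem_univ x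
      exact ⟨f, by simpa using hn hw, mem_iUnion_of_mem n hf⟩⟩⟩
  let := IsTopologicalGroup.rightUniformSpace G
  have := IsTopologicalGroup.rightUniformity_isCountablyGenerated (A := G)
  exact UniformSpace.secondCountable_of_separable G

end Metrizability

theorem Continuous.isGδ_singleton_of_surjective {X Y : Type*} [TopologicalSpace X]
    [SecondCountableTopology X] [TopologicalSpace Y] [T2Space Y] {f : X → Y} (hf : Continuous f)
    (hfs : Surjective f) (y : Y) : IsGδ ({y} : Set Y) := by
  obtain ⟨T, hT𝒰, hTc, hT⟩ := isOpen_biUnion_countable {U : Set Y | IsOpen U ∧ y ∈ U}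
    (fun U => f ⁻¹' (closure U)ᶜ) fun U _ => isClosed_closure.isOpen_compl.preimage hf
  refine ⟨T, fun U hU => (hT𝒰 hU).1, hTc, Subset.antisymm ?_ fun z hz => ?_⟩
  · exact singleton_subset_iff.2 (mem_sInter.2 fun U hU => (hT𝒰 hU).2)
  · by_contra hzy
    obtain ⟨x, rfl⟩ := hfs z
    obtain ⟨U, V, hU, hV, hyU, hxV, hUV⟩ := t2_separation (Ne.symm hzy)
    have hx : x ∈ ⋃ U ∈ {U : Set Y | IsOpen U ∧ y ∈ U}, f ⁻¹' (closure U)ᶜ :=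
      mem_biUnion (x := U) ⟨hU, hyU⟩ fun h => disjoint_left.1 (hUV.closure_left hV) h hxV
    obtain ⟨U', hU', hxU'⟩ := mem_iUnion₂.1 (hT ▸ hx)
    exact hxU' (subset_closure (hz U' hU'))

/-- Every ω-precompact sequentially h-complete Hausdorff group of countable
pseudocharacter is totally minimal and metrizable. -/
theorem stmt5 (G : Type u) [Group G] [TopologicalSpace G] [IsTopologicalGroup G] [T2Space G]
    (hω : OmegaPrecompact G) (hs : SeqHComplete G) (hψ : CountablePseudocharacter G) :
    TotallyMinimal G ∧ TopologicalSpace.MetrizableSpace G := by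
  obtain ⟨s, hso, hs1⟩ := hψ
  have := hω.firstCountableTopology hs (hs1 ▸ IsGδ.iInter_of_isOpen hso)
  refine ⟨fun H _ _ _ _ f hf hfs => ?_, IsTopologicalGroup.metrizableSpace⟩
  have := hω.secondCountableTopology
  have := (hω.map f hf hfs).firstCountableTopology (hs.map f hf hfs)
    (hf.isGδ_singleton_of_surjective hfs 1)
  exact f.isOpenMap_of_image_mem_nhds_one fun _ => f.image_mem_nhds_one_of_seqComplete hω
    (hs.seqComplete_of_le le_rfl) ((hs.map f hf hfs).seqComplete_of_le le_rfl) hf hfs
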